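/- arXiv:2012.00077 — 2 statements merged into one kernel-verified Lean document; each statement's English description precedes it below -/
import Mathlib

section
/- (Achievability part of the main hypothesis-testing theorem.) For every γ ≥ 0 and every K ∈ ℕ, the region of error-exponent pairs achievable in a (γ,K)-almost-fixed-length manner contains R_γ ∩ K·R_FL, i.e., R_γ ∩ K·R_FL ⊆ R_AFL^(γ,K). -/
open Real Finset
open scoped Classical

noncomputable section

variable {X : Type} [Fintype X]

/-- `p` is a probability mass function on the finite alphabet `X`. -/
def IsPMF (p : X → ℝ) : Prop := (∀ x, 0 ≤ p x) ∧ ∑ x, p x = 1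

/-- Kullback–Leibler divergence (natural logarithms) between distributions on a finite
alphabet, with the convention `0 · log(0/·) = 0`. -/
def klDiv (p q : X → ℝ) : ℝ := ∑ x, p x * Real.log (p x / q x)

/-- The `λ`-tilted distribution between `P1` and `P2`. -/
def tilted (P1 P2 : X → ℝ) (lam : ℝ) (x : X) : ℝ :=
  P1 x ^ (1 - lam) * P2 x ^ lam / ∑ a, P1 a ^ (1 - lam) * P2 a ^ lam

/-- The fixed-length error-exponent region
`R_FL = {(E1,E2) : ∃ λ ∈ [0,1], E1 ≤ D(P^(λ)‖P1) ∧ E2 ≤ D(P^(λ)‖P2)}`. -/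
def RFL (P1 P2 : X → ℝ) : Set (ℝ × ℝ) :=
  { E | ∃ lam ∈ Set.Icc (0:ℝ) 1,
      E.1 ≤ klDiv (tilted P1 P2 lam) P1 ∧ E.2 ≤ klDiv (tilted P1 P2 lam) P2 }

/-- `E1(γ) = max { D(P^(λ)‖P1) : λ ∈ [0,1], D(P^(λ)‖P2) ≥ γ }`. -/
def E1exp (P1 P2 : X → ℝ) (γ : ℝ) : ℝ :=
  sSup { e | ∃ lam ∈ Set.Icc (0:ℝ) 1,
      γ ≤ klDiv (tilted P1 P2 lam) P2 ∧ e = klDiv (tilted P1 P2 lam) P1 }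

/-- `E2(γ) = max { D(P^(λ)‖P2) : λ ∈ [0,1], D(P^(λ)‖P1) ≥ γ }`. -/
def E2exp (P1 P2 : X → ℝ) (γ : ℝ) : ℝ :=
  sSup { e | ∃ lam ∈ Set.Icc (0:ℝ) 1,
      γ ≤ klDiv (tilted P1 P2 lam) P1 ∧ e = klDiv (tilted P1 P2 lam) P2 }

/-- `R_γ = R_FL ∪ ([0,E1(γ)] × [0,E2(γ)])`. -/
def Rgamma (P1 P2 : X → ℝ) (γ : ℝ) : Set (ℝ × ℝ) :=
  RFL P1 P2 ∪ (Set.Icc 0 (E1exp P1 P2 γ) ×ˢ Set.Icc 0 (E2exp P1 P2 γ))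

/-- `K·S = {K·x : x ∈ S}` for `S ⊆ ℝ²`. -/
def scaleSet (K : ℕ) (S : Set (ℝ × ℝ)) : Set (ℝ × ℝ) :=
  (fun p : ℝ × ℝ => ((K : ℝ) * p.1, (K : ℝ) * p.2)) '' S

/-- Probability of the i.i.d. sample sequence `x` under the distribution `P`. -/
def prodProb (P : X → ℝ) {N : ℕ} (x : Fin N → X) : ℝ := ∏ i, P (x i)

/-- The first `n` samples, as a list. -/
def histX {N : ℕ} (x : Fin N → X) (n : ℕ) : List X := (List.ofFn x).take n

/-- A sequential binary hypothesis test whose stopping time is almost surely bounded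
by `N`: a stopping time `τ` with respect to the filtration `σ(X_1,…,X_n)` together with
a decision (`accept1 = true` means "choose `H1`") taken at the stopping time; the
decision regions are `A1^τ = {accept1}` and `A2^τ = {¬ accept1}`. -/
structure SeqTest (X : Type) [Fintype X] (N : ℕ) where
  τ : (Fin N → X) → ℕ
  τ_le : ∀ x, τ x ≤ N
  τ_stopping : ∀ x x', histX x' (τ x) = histX x (τ x) → τ x' = τ x
  accept1 : List X → Bool

/-- Type-I error probability `P1(A2^τ)`. -/
def errProb1 (P1 : X → ℝ) {N : ℕ} (T : SeqTest X N) : ℝ :=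
  ∑ x : Fin N → X, prodProb P1 x *
    (if T.accept1 (histX x (T.τ x)) = false then 1 else 0)

/-- Type-II error probability `P2(A1^τ)`. -/
def errProb2 (P2 : X → ℝ) {N : ℕ} (T : SeqTest X N) : ℝ :=
  ∑ x : Fin N → X, prodProb P2 x *
    (if T.accept1 (histX x (T.τ x)) = true then 1 else 0)

/-- Probability `P(τ > n)` under sampling distribution `P`. -/
def lateProbHT (P : X → ℝ) {N : ℕ} (T : SeqTest X N) (n : ℕ) : ℝ :=
  ∑ x : Fin N → X, prodProb P x * (if n < T.τ x then 1 else 0)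

/-- `(E1,E2)` is achievable in a `(γ,K)`-almost-fixed-length manner: for every `δ > 0`
and all large `n` there is a test with `P_i(τ > n) ≤ e^{−γn}`, `τ ≤ Kn` a.s. (encoded in
the type of the test), `P1(A2^τ) ≤ e^{−(E1−δ)n}` and `P2(A1^τ) ≤ e^{−(E2−δ)n}`. -/
def AFLAchievable (P1 P2 : X → ℝ) (γ : ℝ) (K : ℕ) (E : ℝ × ℝ) : Prop :=
  ∀ δ > 0, ∃ N0 : ℕ, ∀ n : ℕ, n ≥ N0 → ∃ T : SeqTest X (K * n),
    lateProbHT P1 T n ≤ Real.exp (-(γ * n)) ∧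
    lateProbHT P2 T n ≤ Real.exp (-(γ * n)) ∧
    errProb1 P1 T ≤ Real.exp (-((E.1 - δ) * n)) ∧
    errProb2 P2 T ≤ Real.exp (-((E.2 - δ) * n))

/-- `R_AFL^(γ,K)`: the region of error-exponent pairs achievable in a
`(γ,K)`-almost-fixed-length manner. -/
def RAFL (P1 P2 : X → ℝ) (γ : ℝ) (K : ℕ) : Set (ℝ × ℝ) :=
  { E | AFLAchievable P1 P2 γ K E }

/-!
The exponents are achieved by a two-stage likelihood-ratio test. After `n` samples it accepts
`H1` if the log-likelihood ratio `S_n` is at least `n θ(λA)`, rejects if it is at most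
`n θ(λB)`, and otherwise continues to `Kn` samples and compares `S_{Kn}` with `Kn θ(λS)`, where
`θ(λ)` is the mean of the log-likelihood ratio under the tilted law `P^(λ)`. The Chernoff bound
with the tilting parameter `λ` itself gives `P1(S_m ≤ m θ(λ)) ≤ e^{-m D(P^(λ)‖P1)}` and
`P2(S_m ≥ m θ(λ)) ≤ e^{-m D(P^(λ)‖P2)}`, so each error is at most the sum of a first-stage and a
second-stage exponential, and `P_i(τ > n)` is bounded by a first-stage one. A point of `R_FL` is
served by `λA = λB`, when the test never continues; a point of the box `[0,E1(γ)] × [0,E2(γ)]`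
by `λA`, `λB` nearly attaining `E2(γ)`, `E1(γ)`, whose constraints `D(P^(λA)‖P1) ≥ γ` and
`D(P^(λB)‖P2) ≥ γ` bound the probability of continuing. The point lying in `K·R_FL` is what
makes the second stage, which has `Kn` samples, fast enough.
-/

lemma IsPMF.nonempty {p : X → ℝ} (hp : IsPMF p) : Nonempty X := by
  by_contra h
  rw [not_nonempty_iff] at h
  simpa using hp.2

theorem klDiv_nonneg {q p : X → ℝ} (hq : ∀ x, 0 < q x) (hp : ∀ x, 0 < p x)
    (hqs : ∑ x, q x = 1) (hps : ∑ x, p x = 1) : 0 ≤ klDiv q p := by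
  calc (0 : ℝ) = ∑ x, (q x - p x) := by rw [sum_sub_distrib, hqs, hps, sub_self]
    _ ≤ klDiv q p := sum_le_sum fun x _ => by
      have h := one_sub_inv_le_log_of_pos (div_pos (hq x) (hp x))
      rw [inv_div] at h
      calc q x - p x = q x * (1 - p x / q x) := by
            rw [mul_sub, mul_one, mul_div_cancel₀ _ (hq x).ne']
        _ ≤ q x * log (q x / p x) := mul_le_mul_of_nonneg_left h (hq x).le

lemma klDiv_eq_of_log_div_eq {q p f : X → ℝ} {c d : ℝ} (hq : ∑ x, q x = 1)
    (h : ∀ x, log (q x / p x) = c * f x + d) : klDiv q p = c * ∑ x, q x * f x + d := by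
  simp only [klDiv, h, mul_add, sum_add_distrib, ← sum_mul, hq, one_mul, mul_sum]
  congr 1
  exact sum_congr rfl fun x _ => by ring

lemma rpow_one_sub_mul_rpow_eq_left {p q : ℝ} (hp : 0 < p) (hq : 0 < q) (s : ℝ) :
    p ^ (1 - s) * q ^ s = p * exp (s * -log (p / q)) := by
  calc p ^ (1 - s) * q ^ s = exp (log p + s * -(log p - log q)) := by
        rw [rpow_def_of_pos hp, rpow_def_of_pos hq, ← exp_add]
        ring_nf
    _ = p * exp (s * -log (p / q)) := by rw [exp_add, exp_log hp, log_div hp.ne' hq.ne']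

lemma rpow_one_sub_mul_rpow_eq_right {p q : ℝ} (hp : 0 < p) (hq : 0 < q) (s : ℝ) :
    p ^ (1 - s) * q ^ s = q * exp ((1 - s) * log (p / q)) := by
  calc p ^ (1 - s) * q ^ s = exp (log q + (1 - s) * (log p - log q)) := by
        rw [rpow_def_of_pos hp, rpow_def_of_pos hq, ← exp_add]
        ring_nf
    _ = q * exp ((1 - s) * log (p / q)) := by rw [exp_add, exp_log hq, log_div hp.ne' hq.ne']

section Tilted

def llr (P1 P2 : X → ℝ) (a : X) : ℝ := log (P1 a / P2 a)

def tiltedPartition (P1 P2 : X → ℝ) (lam : ℝ) : ℝ := ∑ a, P1 a ^ (1 - lam) * P2 a ^ lam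

def tiltedMeanLLR (P1 P2 : X → ℝ) (lam : ℝ) : ℝ := ∑ a, tilted P1 P2 lam a * llr P1 P2 a

variable {P1 P2 : X → ℝ}

lemma tilted_eq (lam : ℝ) (a : X) :
    tilted P1 P2 lam a = P1 a ^ (1 - lam) * P2 a ^ lam / tiltedPartition P1 P2 lam := rfl

lemma tilted_div_left (hs1 : ∀ x, 0 < P1 x) (hs2 : ∀ x, 0 < P2 x) (lam : ℝ) (a : X) :
    tilted P1 P2 lam a / P1 a = exp (lam * -llr P1 P2 a) / tiltedPartition P1 P2 lam := by
  rw [tilted_eq, rpow_one_sub_mul_rpow_eq_left (hs1 a) (hs2 a), llr]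
  field_simp [(hs1 a).ne']

lemma tilted_div_right (hs1 : ∀ x, 0 < P1 x) (hs2 : ∀ x, 0 < P2 x) (lam : ℝ) (a : X) :
    tilted P1 P2 lam a / P2 a = exp ((1 - lam) * llr P1 P2 a) / tiltedPartition P1 P2 lam := by
  rw [tilted_eq, rpow_one_sub_mul_rpow_eq_right (hs1 a) (hs2 a), llr]
  field_simp [(hs2 a).ne']

lemma tiltedPartition_eq_mgf_left (hs1 : ∀ x, 0 < P1 x) (hs2 : ∀ x, 0 < P2 x) (lam : ℝ) :
    tiltedPartition P1 P2 lam = ∑ a, P1 a * exp (lam * -llr P1 P2 a) :=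
  sum_congr rfl fun a _ => rpow_one_sub_mul_rpow_eq_left (hs1 a) (hs2 a) lam

lemma tiltedPartition_eq_mgf_right (hs1 : ∀ x, 0 < P1 x) (hs2 : ∀ x, 0 < P2 x) (lam : ℝ) :
    tiltedPartition P1 P2 lam = ∑ a, P2 a * exp ((1 - lam) * llr P1 P2 a) :=
  sum_congr rfl fun a _ => rpow_one_sub_mul_rpow_eq_right (hs1 a) (hs2 a) lam

variable [Nonempty X]

lemma tiltedPartition_pos (hs1 : ∀ x, 0 < P1 x) (hs2 : ∀ x, 0 < P2 x) (lam : ℝ) :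
    0 < tiltedPartition P1 P2 lam :=
  sum_pos (fun a _ => mul_pos (rpow_pos_of_pos (hs1 a) _) (rpow_pos_of_pos (hs2 a) _))
    univ_nonempty

lemma tilted_pos (hs1 : ∀ x, 0 < P1 x) (hs2 : ∀ x, 0 < P2 x) (lam : ℝ) (a : X) :
    0 < tilted P1 P2 lam a :=
  div_pos (mul_pos (rpow_pos_of_pos (hs1 a) _) (rpow_pos_of_pos (hs2 a) _))
    (tiltedPartition_pos hs1 hs2 lam)

lemma sum_tilted (hs1 : ∀ x, 0 < P1 x) (hs2 : ∀ x, 0 < P2 x) (lam : ℝ) :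
    ∑ a, tilted P1 P2 lam a = 1 := by
  simp only [tilted_eq, ← sum_div]
  exact div_self (tiltedPartition_pos hs1 hs2 lam).ne'

lemma klDiv_tilted_left (hs1 : ∀ x, 0 < P1 x) (hs2 : ∀ x, 0 < P2 x) (lam : ℝ) :
    klDiv (tilted P1 P2 lam) P1 =
      -lam * tiltedMeanLLR P1 P2 lam - log (tiltedPartition P1 P2 lam) := by
  refine klDiv_eq_of_log_div_eq (sum_tilted hs1 hs2 lam) fun a => ?_
  rw [tilted_div_left hs1 hs2, log_div (exp_pos _).ne' (tiltedPartition_pos hs1 hs2 lam).ne',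
    log_exp]
  ring

lemma klDiv_tilted_right (hs1 : ∀ x, 0 < P1 x) (hs2 : ∀ x, 0 < P2 x) (lam : ℝ) :
    klDiv (tilted P1 P2 lam) P2 =
      (1 - lam) * tiltedMeanLLR P1 P2 lam - log (tiltedPartition P1 P2 lam) := by
  refine klDiv_eq_of_log_div_eq (sum_tilted hs1 hs2 lam) fun a => ?_
  rw [tilted_div_right hs1 hs2, log_div (exp_pos _).ne' (tiltedPartition_pos hs1 hs2 lam).ne',
    log_exp]
  ring

end Tilted

section Sequences

def seqProb (P : X → ℝ) {m : ℕ} (A : (Fin m → X) → Prop) [DecidablePred A] : ℝ :=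
  ∑ y, prodProb P y * if A y then 1 else 0

lemma prodProb_snoc {α : Type} (P : α → ℝ) {m : ℕ} (y : Fin m → α) (a : α) :
    prodProb P (Fin.snoc y a : Fin (m + 1) → α) = prodProb P y * P a := by
  simp [prodProb, Fin.prod_univ_castSucc]

lemma histX_of_le {α : Type} {N n : ℕ} (x : Fin N → α) (h : N ≤ n) : histX x n = List.ofFn x :=
  List.take_of_length_le (by simpa using h)

lemma length_histX {α : Type} {N n : ℕ} (x : Fin N → α) (h : n ≤ N) :
    (histX x n).length = n := by
  simpa [histX] using h

lemma histX_init {α : Type} {m n : ℕ} (x : Fin (m + 1) → α) (h : n ≤ m) :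
    histX (Fin.init x) n = histX x n := by
  rw [histX, histX, List.ofFn_succ', List.concat_eq_append,
    List.take_append_of_le_length (by simpa using h)]
  rfl

variable {P : X → ℝ} {m : ℕ}

lemma seqProb_mono (hP : ∀ x, 0 ≤ P x) {A B : (Fin m → X) → Prop} [DecidablePred A]
    [DecidablePred B] (h : ∀ y, A y → B y) : seqProb P A ≤ seqProb P B :=
  sum_le_sum fun y _ => mul_le_mul_of_nonneg_left
    (by split_ifs with hA hB <;> first | exact absurd (h y hA) hB | norm_num)
    (prod_nonneg fun i _ => hP _)

lemma seqProb_or_le (hP : ∀ x, 0 ≤ P x) (A B : (Fin m → X) → Prop) [DecidablePred A]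
    [DecidablePred B] : seqProb P (fun y => A y ∨ B y) ≤ seqProb P A + seqProb P B := by
  rw [seqProb, seqProb, seqProb, ← sum_add_distrib]
  refine sum_le_sum fun y _ => ?_
  rw [← mul_add]
  exact mul_le_mul_of_nonneg_left (by split_ifs <;> simp_all) (prod_nonneg fun i _ => hP _)

lemma seqProb_of_forall_not {A : (Fin m → X) → Prop} [DecidablePred A] (h : ∀ y, ¬A y) :
    seqProb P A = 0 :=
  sum_eq_zero fun y _ => by rw [if_neg (h y), mul_zero]

lemma sum_prodProb_mul_init (hP : ∑ a, P a = 1) (g : (Fin m → X) → ℝ) :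
    ∑ x : Fin (m + 1) → X, prodProb P x * g (Fin.init x) = ∑ y, prodProb P y * g y := by
  rw [← (Fin.snocEquiv fun _ => X).sum_comp, Fintype.sum_prod_type, sum_comm]
  simp only [Fin.snocEquiv, Equiv.coe_fn_mk, prodProb_snoc, Fin.init_snoc, mul_right_comm _ (P _)]
  simp only [← mul_sum, hP, mul_one]

lemma seqProb_histX (hP : ∑ a, P a = 1) {n N : ℕ} (h : n ≤ N) (B : List X → Prop)
    [DecidablePred B] :
    seqProb P (fun x : Fin N → X => B (histX x n)) =
      seqProb P (fun y : Fin n → X => B (List.ofFn y)) := by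
  induction N, h using Nat.le_induction with
  | base => exact sum_congr rfl fun x _ => by simp only [histX_of_le x le_rfl]
  | succ N hnN ih =>
    rw [← ih]
    refine (sum_congr rfl fun x _ => ?_).trans
      (sum_prodProb_mul_init hP fun y => if B (histX y n) then 1 else 0)
    simp only [histX_init x hnN]

theorem seqProb_le_exp_mul_mgf_pow (hP : ∀ x, 0 ≤ P x) (f : X → ℝ) {s : ℝ} (hs : 0 ≤ s)
    (t : ℝ) : seqProb P (fun y : Fin m → X => t ≤ ∑ i, f (y i)) ≤
      exp (-(s * t)) * (∑ a, P a * exp (s * f a)) ^ m := by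
  calc seqProb P (fun y : Fin m → X => t ≤ ∑ i, f (y i))
      ≤ ∑ y : Fin m → X, prodProb P y * exp (s * (∑ i, f (y i) - t)) :=
        sum_le_sum fun y _ => mul_le_mul_of_nonneg_left
          (by split_ifs with h
              · exact one_le_exp (mul_nonneg hs (sub_nonneg.2 h))
              · exact (exp_pos _).le)
          (prod_nonneg fun i _ => hP _)
    _ = exp (-(s * t)) * ∑ y : Fin m → X, ∏ i, P (y i) * exp (s * f (y i)) := by
        rw [mul_sum]
        refine sum_congr rfl fun y _ => ?_
        rw [prodProb, prod_mul_distrib, ← exp_sum, ← mul_sum, mul_left_comm, ← exp_add]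
        ring_nf
    _ = exp (-(s * t)) * (∑ a, P a * exp (s * f a)) ^ m := by
        rw [← Fintype.prod_sum (fun _ a => P a * exp (s * f a)), Fin.prod_const]

end Sequences

lemma exp_mul_pow_eq_exp {Z : ℝ} (hZ : 0 < Z) (u : ℝ) (m : ℕ) :
    exp u * Z ^ m = exp (u + m * log Z) := by
  rw [exp_add, exp_nat_mul, exp_log hZ]

section Chernoff

def llrSum (P1 P2 : X → ℝ) (l : List X) : ℝ := (l.map (llr P1 P2)).sum

lemma llrSum_ofFn {α : Type} (P1 P2 : α → ℝ) {m : ℕ} (y : Fin m → α) :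
    llrSum P1 P2 (List.ofFn y) = ∑ i, llr P1 P2 (y i) := by
  simp [llrSum, List.map_ofFn, List.sum_ofFn]

variable {P1 P2 : X → ℝ} [Nonempty X]

theorem seqProb_llrSum_le_tiltedMean (hs1 : ∀ x, 0 < P1 x) (hs2 : ∀ x, 0 < P2 x) {lam : ℝ}
    (hlam : 0 ≤ lam) (m : ℕ) :
    seqProb P1 (fun y : Fin m → X => llrSum P1 P2 (List.ofFn y) ≤ m * tiltedMeanLLR P1 P2 lam) ≤
      exp (-(m * klDiv (tilted P1 P2 lam) P1)) := by
  calc seqProb P1 (fun y : Fin m → X => llrSum P1 P2 (List.ofFn y) ≤ m * tiltedMeanLLR P1 P2 lam)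
      = seqProb P1 (fun y : Fin m → X =>
          -(m * tiltedMeanLLR P1 P2 lam) ≤ ∑ i, -llr P1 P2 (y i)) := by
        simp only [llrSum_ofFn, sum_neg_distrib, neg_le_neg_iff]
    _ ≤ exp (-(lam * -(m * tiltedMeanLLR P1 P2 lam))) * tiltedPartition P1 P2 lam ^ m := by
        rw [tiltedPartition_eq_mgf_left hs1 hs2]
        exact seqProb_le_exp_mul_mgf_pow (fun x => (hs1 x).le) (fun a => -llr P1 P2 a) hlam _
    _ = exp (-(m * klDiv (tilted P1 P2 lam) P1)) := by
        rw [exp_mul_pow_eq_exp (tiltedPartition_pos hs1 hs2 lam), klDiv_tilted_left hs1 hs2]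
        ring_nf

theorem seqProb_tiltedMean_le_llrSum (hs1 : ∀ x, 0 < P1 x) (hs2 : ∀ x, 0 < P2 x) {lam : ℝ}
    (hlam : lam ≤ 1) (m : ℕ) :
    seqProb P2 (fun y : Fin m → X => m * tiltedMeanLLR P1 P2 lam ≤ llrSum P1 P2 (List.ofFn y)) ≤
      exp (-(m * klDiv (tilted P1 P2 lam) P2)) := by
  calc seqProb P2 (fun y : Fin m → X => m * tiltedMeanLLR P1 P2 lam ≤ llrSum P1 P2 (List.ofFn y))
      = seqProb P2 (fun y : Fin m → X => m * tiltedMeanLLR P1 P2 lam ≤ ∑ i, llr P1 P2 (y i)) := by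
        simp only [llrSum_ofFn]
    _ ≤ exp (-((1 - lam) * (m * tiltedMeanLLR P1 P2 lam))) * tiltedPartition P1 P2 lam ^ m := by
        rw [tiltedPartition_eq_mgf_right hs1 hs2]
        exact seqProb_le_exp_mul_mgf_pow (fun x => (hs2 x).le) (llr P1 P2) (sub_nonneg.2 hlam) _
    _ = exp (-(m * klDiv (tilted P1 P2 lam) P2)) := by
        rw [exp_mul_pow_eq_exp (tiltedPartition_pos hs1 hs2 lam), klDiv_tilted_right hs1 hs2]
        ring_nf

end Chernoff

section TwoStageTest

variable (P1 P2 : X → ℝ) (n K : ℕ) (hK : 1 ≤ K) (a b c : ℝ)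

def twoStageTest : SeqTest X (K * n) where
  τ x := if n * b < llrSum P1 P2 (histX x n) ∧ llrSum P1 P2 (histX x n) < n * a then K * n else n
  τ_le x := by
    split_ifs
    · exact le_rfl
    · exact Nat.le_mul_of_pos_left n hK
  τ_stopping x x' h := by
    by_cases hc : n * b < llrSum P1 P2 (histX x n) ∧ llrSum P1 P2 (histX x n) < n * a
    · rw [if_pos hc, histX_of_le _ le_rfl, histX_of_le _ le_rfl] at h
      rw [List.ofFn_injective h]
    · rw [if_neg hc] at h ⊢
      rw [h, if_neg hc]
  accept1 l := if l.length < K * n then decide (n * a ≤ llrSum P1 P2 l)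
    else decide ((K * n : ℕ) * c ≤ llrSum P1 P2 l)

variable {P1 P2 n K hK a b c}

lemma twoStageTest_continues_of_lt (x : Fin (K * n) → X)
    (h : n < (twoStageTest P1 P2 n K hK a b c).τ x) :
    n * b < llrSum P1 P2 (histX x n) ∧ llrSum P1 P2 (histX x n) < n * a := by
  by_contra hc
  simp only [twoStageTest, if_neg hc, lt_irrefl] at h

lemma twoStageTest_accept1 (x : Fin (K * n) → X) :
    let T := twoStageTest P1 P2 n K hK a b c
    T.accept1 (histX x (T.τ x)) =
      if ¬(n * b < llrSum P1 P2 (histX x n) ∧ llrSum P1 P2 (histX x n) < n * a) ∧ n < K * n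
      then decide (n * a ≤ llrSum P1 P2 (histX x n))
      else decide ((K * n : ℕ) * c ≤ llrSum P1 P2 (List.ofFn x)) := by
  by_cases hc : n * b < llrSum P1 P2 (histX x n) ∧ llrSum P1 P2 (histX x n) < n * a
  · simp [twoStageTest, hc, histX_of_le x le_rfl]
  · by_cases hn : n < K * n
    · simp [twoStageTest, hc, hn, length_histX x hn.le]
    · have hfull : histX x n = List.ofFn x := histX_of_le x (not_lt.1 hn)
      rw [hfull] at hc ⊢
      simp [twoStageTest, hc, hn, hfull]

lemma twoStageTest_reject (x : Fin (K * n) → X)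
    (h : (twoStageTest P1 P2 n K hK a b c).accept1
      (histX x ((twoStageTest P1 P2 n K hK a b c).τ x)) = false) :
    llrSum P1 P2 (histX x n) ≤ n * b ∨ llrSum P1 P2 (List.ofFn x) ≤ (K * n : ℕ) * c := by
  rw [twoStageTest_accept1] at h
  split_ifs at h with hstop
  · rw [decide_eq_false_iff_not, not_le] at h
    exact Or.inl (le_of_not_gt fun hb => hstop.1 ⟨hb, h⟩)
  · rw [decide_eq_false_iff_not, not_le] at h
    exact Or.inr h.le

lemma twoStageTest_accept (x : Fin (K * n) → X)
    (h : (twoStageTest P1 P2 n K hK a b c).accept1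
      (histX x ((twoStageTest P1 P2 n K hK a b c).τ x)) = true) :
    n * a ≤ llrSum P1 P2 (histX x n) ∨ (K * n : ℕ) * c ≤ llrSum P1 P2 (List.ofFn x) := by
  rw [twoStageTest_accept1] at h
  split_ifs at h
  · exact Or.inl (of_decide_eq_true h)
  · exact Or.inr (of_decide_eq_true h)

lemma lateProbHT_twoStageTest_le {P : X → ℝ} (hP : IsPMF P) :
    lateProbHT P (twoStageTest P1 P2 n K hK a b c) n ≤
      seqProb P (fun y : Fin n → X =>
        n * b < llrSum P1 P2 (List.ofFn y) ∧ llrSum P1 P2 (List.ofFn y) < n * a) :=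
  (seqProb_mono hP.1 twoStageTest_continues_of_lt).trans_eq
    (seqProb_histX hP.2 (Nat.le_mul_of_pos_left n hK) fun l =>
      n * b < llrSum P1 P2 l ∧ llrSum P1 P2 l < n * a)

lemma lateProbHT_twoStageTest_self (P : X → ℝ) :
    lateProbHT P (twoStageTest P1 P2 n K hK a a c) n = 0 :=
  seqProb_of_forall_not fun x h =>
    let ⟨hb, ha⟩ := twoStageTest_continues_of_lt x h
    lt_asymm hb ha

lemma errProb1_twoStageTest_le (h1 : IsPMF P1) :
    errProb1 P1 (twoStageTest P1 P2 n K hK a b c) ≤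
      seqProb P1 (fun y : Fin n → X => llrSum P1 P2 (List.ofFn y) ≤ n * b) +
        seqProb P1 (fun x : Fin (K * n) → X => llrSum P1 P2 (List.ofFn x) ≤ (K * n : ℕ) * c) := by
  calc errProb1 P1 (twoStageTest P1 P2 n K hK a b c)
      ≤ seqProb P1 (fun x : Fin (K * n) → X => llrSum P1 P2 (histX x n) ≤ n * b ∨
          llrSum P1 P2 (List.ofFn x) ≤ (K * n : ℕ) * c) :=
        seqProb_mono h1.1 twoStageTest_reject
    _ ≤ _ := seqProb_or_le h1.1 _ _
    _ = _ := by
        rw [seqProb_histX h1.2 (Nat.le_mul_of_pos_left n hK) fun l => llrSum P1 P2 l ≤ n * b]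

lemma errProb2_twoStageTest_le (h2 : IsPMF P2) :
    errProb2 P2 (twoStageTest P1 P2 n K hK a b c) ≤
      seqProb P2 (fun y : Fin n → X => n * a ≤ llrSum P1 P2 (List.ofFn y)) +
        seqProb P2 (fun x : Fin (K * n) → X => (K * n : ℕ) * c ≤ llrSum P1 P2 (List.ofFn x)) := by
  calc errProb2 P2 (twoStageTest P1 P2 n K hK a b c)
      ≤ seqProb P2 (fun x : Fin (K * n) → X => n * a ≤ llrSum P1 P2 (histX x n) ∨
          (K * n : ℕ) * c ≤ llrSum P1 P2 (List.ofFn x)) :=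
        seqProb_mono h2.1 twoStageTest_accept
    _ ≤ _ := seqProb_or_le h2.1 _ _
    _ = _ := by
        rw [seqProb_histX h2.2 (Nat.le_mul_of_pos_left n hK) fun l => n * a ≤ llrSum P1 P2 l]

end TwoStageTest

section TiltedThresholds

variable {P1 P2 : X → ℝ} [Nonempty X] {n K : ℕ} {hK : 1 ≤ K} {a b c lam lam' : ℝ}

lemma lateProbHT_twoStageTest_le_exp_left (h1 : IsPMF P1) (hs1 : ∀ x, 0 < P1 x)
    (hs2 : ∀ x, 0 < P2 x) (hlam : 0 ≤ lam) :
    lateProbHT P1 (twoStageTest P1 P2 n K hK (tiltedMeanLLR P1 P2 lam) b c) n ≤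
      exp (-(n * klDiv (tilted P1 P2 lam) P1)) :=
  (lateProbHT_twoStageTest_le h1).trans <|
    (seqProb_mono h1.1 fun _ hy => hy.2.le).trans (seqProb_llrSum_le_tiltedMean hs1 hs2 hlam n)

lemma lateProbHT_twoStageTest_le_exp_right (h2 : IsPMF P2) (hs1 : ∀ x, 0 < P1 x)
    (hs2 : ∀ x, 0 < P2 x) (hlam : lam ≤ 1) :
    lateProbHT P2 (twoStageTest P1 P2 n K hK a (tiltedMeanLLR P1 P2 lam) c) n ≤
      exp (-(n * klDiv (tilted P1 P2 lam) P2)) :=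
  (lateProbHT_twoStageTest_le h2).trans <|
    (seqProb_mono h2.1 fun _ hy => hy.1.le).trans (seqProb_tiltedMean_le_llrSum hs1 hs2 hlam n)

lemma errProb1_twoStageTest_le_exp (h1 : IsPMF P1) (hs1 : ∀ x, 0 < P1 x) (hs2 : ∀ x, 0 < P2 x)
    (hlam : 0 ≤ lam) (hlam' : 0 ≤ lam') :
    errProb1 P1
        (twoStageTest P1 P2 n K hK a (tiltedMeanLLR P1 P2 lam) (tiltedMeanLLR P1 P2 lam')) ≤
      exp (-(n * klDiv (tilted P1 P2 lam) P1)) +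
        exp (-((K * n : ℕ) * klDiv (tilted P1 P2 lam') P1)) :=
  (errProb1_twoStageTest_le h1).trans <|
    add_le_add (seqProb_llrSum_le_tiltedMean hs1 hs2 hlam n)
      (seqProb_llrSum_le_tiltedMean hs1 hs2 hlam' _)

lemma errProb2_twoStageTest_le_exp (h2 : IsPMF P2) (hs1 : ∀ x, 0 < P1 x) (hs2 : ∀ x, 0 < P2 x)
    (hlam : lam ≤ 1) (hlam' : lam' ≤ 1) :
    errProb2 P2
        (twoStageTest P1 P2 n K hK (tiltedMeanLLR P1 P2 lam) b (tiltedMeanLLR P1 P2 lam')) ≤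
      exp (-(n * klDiv (tilted P1 P2 lam) P2)) +
        exp (-((K * n : ℕ) * klDiv (tilted P1 P2 lam') P2)) :=
  (errProb2_twoStageTest_le h2).trans <|
    add_le_add (seqProb_tiltedMean_le_llrSum hs1 hs2 hlam n)
      (seqProb_tiltedMean_le_llrSum hs1 hs2 hlam' _)

end TiltedThresholds

lemma exists_lt_or_nonpos_of_le_sSup {s : Set ℝ} {x ε : ℝ} (hx : x ≤ sSup s) (hε : 0 < ε) :
    (∃ y ∈ s, x - ε < y) ∨ x ≤ 0 := by
  rcases s.eq_empty_or_nonempty with rfl | hs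
  · exact Or.inr (Real.sSup_empty ▸ hx)
  · exact Or.inl (exists_lt_of_lt_csSup hs (by linarith))

lemma exists_tilted_pair_of_mem_Rgamma {P1 P2 : X → ℝ} (h1 : IsPMF P1) (h2 : IsPMF P2)
    (hs1 : ∀ x, 0 < P1 x) (hs2 : ∀ x, 0 < P2 x) [Nonempty X] {γ ε : ℝ} {E : ℝ × ℝ}
    (hE : E ∈ Rgamma P1 P2 γ) (hε : 0 < ε) :
    ∃ lamA ∈ Set.Icc (0 : ℝ) 1, ∃ lamB ∈ Set.Icc (0 : ℝ) 1,
      E.1 - ε ≤ klDiv (tilted P1 P2 lamB) P1 ∧ E.2 - ε ≤ klDiv (tilted P1 P2 lamA) P2 ∧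
      (lamA = lamB ∨ γ ≤ klDiv (tilted P1 P2 lamA) P1 ∧ γ ≤ klDiv (tilted P1 P2 lamB) P2) := by
  have hD1 (lam : ℝ) : 0 ≤ klDiv (tilted P1 P2 lam) P1 :=
    klDiv_nonneg (tilted_pos hs1 hs2 lam) hs1 (sum_tilted hs1 hs2 lam) h1.2
  have hD2 (lam : ℝ) : 0 ≤ klDiv (tilted P1 P2 lam) P2 :=
    klDiv_nonneg (tilted_pos hs1 hs2 lam) hs2 (sum_tilted hs1 hs2 lam) h2.2
  have h01 : (0 : ℝ) ∈ Set.Icc (0 : ℝ) 1 := Set.left_mem_Icc.2 zero_le_one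
  rcases hE with ⟨lam, hlam, hE1, hE2⟩ | ⟨⟨-, hE1⟩, -, hE2⟩
  · exact ⟨lam, hlam, lam, hlam, by linarith, by linarith, Or.inl rfl⟩
  rcases exists_lt_or_nonpos_of_le_sSup hE1 hε with ⟨_, ⟨lamB, hlamB, hγB, rfl⟩, hB⟩ | hE1 <;>
    rcases exists_lt_or_nonpos_of_le_sSup hE2 hε with ⟨_, ⟨lamA, hlamA, hγA, rfl⟩, hA⟩ | hE2
  · exact ⟨lamA, hlamA, lamB, hlamB, hB.le, hA.le, Or.inr ⟨hγA, hγB⟩⟩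
  · exact ⟨lamB, hlamB, lamB, hlamB, hB.le, by linarith [hD2 lamB], Or.inl rfl⟩
  · exact ⟨lamA, hlamA, lamA, hlamA, by linarith [hD1 lamA], hA.le, Or.inl rfl⟩
  · exact ⟨0, h01, 0, h01, by linarith [hD1 0], by linarith [hD2 0], Or.inl rfl⟩

lemma exp_neg_add_exp_neg_le {n E δ u v : ℝ} (hn : log 2 ≤ δ / 2 * n)
    (hu : (E - δ / 2) * n ≤ u) (hv : (E - δ / 2) * n ≤ v) :
    exp (-u) + exp (-v) ≤ exp (-((E - δ) * n)) := by
  have hu' := exp_le_exp.2 (neg_le_neg hu)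
  have hv' := exp_le_exp.2 (neg_le_neg hv)
  calc exp (-u) + exp (-v) ≤ exp (log 2 + -((E - δ / 2) * n)) := by
        rw [exp_add, exp_log two_pos]
        linarith
    _ ≤ exp (-((E - δ) * n)) := exp_le_exp.2 (by linarith)

theorem afl_ht_achievability_general
    {X : Type} [Fintype X]
    (P1 P2 : X → ℝ) (h1 : IsPMF P1) (h2 : IsPMF P2)
    (hs1 : ∀ x, 0 < P1 x) (hs2 : ∀ x, 0 < P2 x)
    (γ : ℝ) (K : ℕ) (hK : 1 ≤ K) :
    Rgamma P1 P2 γ ∩ scaleSet K (RFL P1 P2) ⊆ RAFL P1 P2 γ K := by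
  have := h1.nonempty
  rintro _ ⟨hEγ, e, ⟨lamS, ⟨hS0, hS1⟩, he1, he2⟩, rfl⟩ δ hδ
  obtain ⟨lamA, ⟨hA0, hA1⟩, lamB, ⟨hB0, hB1⟩, hEB, hEA, hAB⟩ :=
    exists_tilted_pair_of_mem_Rgamma h1 h2 hs1 hs2 hEγ (half_pos hδ)
  obtain ⟨N0, hN0⟩ := Filter.eventually_atTop.1 <|
    (tendsto_natCast_atTop_atTop.const_mul_atTop (half_pos hδ)).eventually_ge_atTop (log 2)
  refine ⟨N0, fun n hn => ⟨twoStageTest P1 P2 n K hK (tiltedMeanLLR P1 P2 lamA)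
    (tiltedMeanLLR P1 P2 lamB) (tiltedMeanLLR P1 P2 lamS), ?_, ?_, ?_, ?_⟩⟩
  all_goals have hn0 : (0 : ℝ) ≤ n := n.cast_nonneg
  · rcases hAB with rfl | ⟨hγA, -⟩
    · exact (lateProbHT_twoStageTest_self P1).trans_le (exp_pos _).le
    · exact (lateProbHT_twoStageTest_le_exp_left h1 hs1 hs2 hA0).trans
        (exp_le_exp.2 (by nlinarith))
  · rcases hAB with rfl | ⟨-, hγB⟩
    · exact (lateProbHT_twoStageTest_self P2).trans_le (exp_pos _).le
    · exact (lateProbHT_twoStageTest_le_exp_right h2 hs1 hs2 hB1).trans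
        (exp_le_exp.2 (by nlinarith))
  · refine (errProb1_twoStageTest_le_exp h1 hs1 hs2 hB0 hS0).trans
      (exp_neg_add_exp_neg_le (hN0 n hn) (by nlinarith) ?_)
    push_cast
    nlinarith [mul_le_mul_of_nonneg_left he1 (by positivity : (0 : ℝ) ≤ K * n)]
  · refine (errProb2_twoStageTest_le_exp h2 hs1 hs2 hA1 hS1).trans
      (exp_neg_add_exp_neg_le (hN0 n hn) (by nlinarith) ?_)
    push_cast
    nlinarith [mul_le_mul_of_nonneg_left he2 (by positivity : (0 : ℝ) ≤ K * n)]

/-- **Achievability.** For every `γ ≥ 0` and every `K ∈ ℕ`,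
`R_γ ∩ K·R_FL ⊆ R_AFL^(γ,K)`. -/
theorem afl_ht_achievability
    {X : Type} [Fintype X]
    (P1 P2 : X → ℝ) (h1 : IsPMF P1) (h2 : IsPMF P2) (hne : P1 ≠ P2)
    (hs1 : ∀ x, 0 < P1 x) (hs2 : ∀ x, 0 < P2 x)
    (γ : ℝ) (hγ : 0 ≤ γ) (K : ℕ) (hK : 1 ≤ K) :
    Rgamma P1 P2 γ ∩ scaleSet K (RFL P1 P2) ⊆ RAFL P1 P2 γ K :=
  afl_ht_achievability_general P1 P2 h1 h2 hs1 hs2 γ K hK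
end
end

section
/- For every γ with 0 ≤ γ ≤ D*, there exists λ1 ∈ [0,1] attaining the maximum defining E1(γ) and satisfying D(P^(λ1)||P2) = γ and D(P^(λ1)||P1) = E1(γ); symmetrically, there exists λ2 ∈ [0,1] attaining the maximum defining E2(γ) and satisfying D(P^(λ2)||P1) = γ and D(P^(λ2)||P2) = E2(γ). -/
open Real Finset
open scoped Classical

noncomputable section

variable {X : Type} [Fintype X]

namespace MaxAux

variable {P1 P2 : X → ℝ}

lemma univ_ne (h1 : ∑ x, P1 x = 1) : (Finset.univ : Finset X).Nonempty := by
  by_contra h'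
  rw [Finset.not_nonempty_iff_eq_empty] at h'
  rw [h'] at h1; simp at h1

lemma Z_pos (hs1 : ∀ x, 0 < P1 x) (hs2 : ∀ x, 0 < P2 x) (h1 : ∑ x, P1 x = 1) (lam : ℝ) :
    0 < ∑ a, P1 a ^ (1 - lam) * P2 a ^ lam :=
  Finset.sum_pos (fun a _ => mul_pos (Real.rpow_pos_of_pos (hs1 a) _)
    (Real.rpow_pos_of_pos (hs2 a) _)) (univ_ne h1)

lemma tilted_pos (hs1 : ∀ x, 0 < P1 x) (hs2 : ∀ x, 0 < P2 x) (h1 : ∑ x, P1 x = 1)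
    (lam : ℝ) (x : X) : 0 < tilted P1 P2 lam x :=
  div_pos (mul_pos (Real.rpow_pos_of_pos (hs1 x) _) (Real.rpow_pos_of_pos (hs2 x) _))
    (Z_pos hs1 hs2 h1 lam)

lemma tilted_sum_one (hs1 : ∀ x, 0 < P1 x) (hs2 : ∀ x, 0 < P2 x) (h1 : ∑ x, P1 x = 1)
    (lam : ℝ) : ∑ x, tilted P1 P2 lam x = 1 := by
  unfold tilted
  rw [← Finset.sum_div]
  exact div_self (Z_pos hs1 hs2 h1 lam).ne'

lemma klDiv_nonneg {p q : X → ℝ} (hp : ∀ x, 0 < p x) (hq : ∀ x, 0 < q x)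
    (hps : ∑ x, p x = 1) (hqs : ∑ x, q x = 1) : 0 ≤ klDiv p q := by
  have key : ∀ x : X, p x - q x ≤ p x * Real.log (p x / q x) := by
    intro x
    have h := Real.log_le_sub_one_of_pos (div_pos (hq x) (hp x))
    have h2 := mul_le_mul_of_nonneg_left h (hp x).le
    rw [mul_sub, mul_one, mul_div_cancel₀ _ (hp x).ne'] at h2
    have h3 : Real.log (p x / q x) = - Real.log (q x / p x) := by
      rw [← Real.log_inv]; congr 1; field_simp
    rw [h3]; nlinarith
  have : ∑ x, (p x - q x) ≤ klDiv p q := Finset.sum_le_sum fun x _ => key x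
  rw [Finset.sum_sub_distrib, hps, hqs] at this
  linarith

def mfun (P1 P2 : X → ℝ) (lam : ℝ) : ℝ :=
  ∑ x, tilted P1 P2 lam x * (Real.log (P1 x) - Real.log (P2 x))

def psif (P1 P2 : X → ℝ) (lam : ℝ) : ℝ :=
  Real.log (∑ a, P1 a ^ (1 - lam) * P2 a ^ lam)

lemma log_tilted (hs1 : ∀ x, 0 < P1 x) (hs2 : ∀ x, 0 < P2 x) (h1 : ∑ x, P1 x = 1)
    (lam : ℝ) (x : X) :
    Real.log (tilted P1 P2 lam x) =
      Real.log (P1 x) - lam * (Real.log (P1 x) - Real.log (P2 x)) - psif P1 P2 lam := by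
  unfold tilted psif
  rw [Real.log_div (mul_pos (Real.rpow_pos_of_pos (hs1 x) _)
        (Real.rpow_pos_of_pos (hs2 x) _)).ne' (Z_pos hs1 hs2 h1 lam).ne',
      Real.log_mul (Real.rpow_pos_of_pos (hs1 x) _).ne' (Real.rpow_pos_of_pos (hs2 x) _).ne',
      Real.log_rpow (hs1 x), Real.log_rpow (hs2 x)]
  ring

lemma f_eq (hs1 : ∀ x, 0 < P1 x) (hs2 : ∀ x, 0 < P2 x) (h1 : ∑ x, P1 x = 1) (lam : ℝ) :
    klDiv (tilted P1 P2 lam) P1 = -lam * mfun P1 P2 lam - psif P1 P2 lam := by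
  have hts := tilted_sum_one hs1 hs2 h1 lam
  unfold klDiv
  have hc : ∀ x ∈ Finset.univ, tilted P1 P2 lam x * Real.log (tilted P1 P2 lam x / P1 x)
      = -lam * (tilted P1 P2 lam x * (Real.log (P1 x) - Real.log (P2 x)))
        - psif P1 P2 lam * tilted P1 P2 lam x := by
    intro x _
    rw [Real.log_div (tilted_pos hs1 hs2 h1 lam x).ne' (hs1 x).ne',
        log_tilted hs1 hs2 h1 lam x]
    ring
  rw [Finset.sum_congr rfl hc, Finset.sum_sub_distrib, ← Finset.mul_sum, ← Finset.mul_sum,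
      hts, mul_one]
  rfl

lemma g_eq (hs1 : ∀ x, 0 < P1 x) (hs2 : ∀ x, 0 < P2 x) (h1 : ∑ x, P1 x = 1) (lam : ℝ) :
    klDiv (tilted P1 P2 lam) P2 = (1 - lam) * mfun P1 P2 lam - psif P1 P2 lam := by
  have hts := tilted_sum_one hs1 hs2 h1 lam
  unfold klDiv
  have hc : ∀ x ∈ Finset.univ, tilted P1 P2 lam x * Real.log (tilted P1 P2 lam x / P2 x)
      = (1 - lam) * (tilted P1 P2 lam x * (Real.log (P1 x) - Real.log (P2 x)))
        - psif P1 P2 lam * tilted P1 P2 lam x := by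
    intro x _
    rw [Real.log_div (tilted_pos hs1 hs2 h1 lam x).ne' (hs2 x).ne',
        log_tilted hs1 hs2 h1 lam x]
    ring
  rw [Finset.sum_congr rfl hc, Finset.sum_sub_distrib, ← Finset.mul_sum, ← Finset.mul_sum,
      hts, mul_one]
  rfl

lemma cross (hs1 : ∀ x, 0 < P1 x) (hs2 : ∀ x, 0 < P2 x) (h1 : ∑ x, P1 x = 1)
    (lam mu : ℝ) :
    0 ≤ (mu - lam) * mfun P1 P2 lam + psif P1 P2 mu - psif P1 P2 lam := by
  have h := klDiv_nonneg (tilted_pos hs1 hs2 h1 lam) (tilted_pos hs1 hs2 h1 mu)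
    (tilted_sum_one hs1 hs2 h1 lam) (tilted_sum_one hs1 hs2 h1 mu)
  have hts := tilted_sum_one hs1 hs2 h1 lam
  have hkey : klDiv (tilted P1 P2 lam) (tilted P1 P2 mu)
      = (mu - lam) * mfun P1 P2 lam + psif P1 P2 mu - psif P1 P2 lam := by
    unfold klDiv
    have hc : ∀ x ∈ Finset.univ,
        tilted P1 P2 lam x * Real.log (tilted P1 P2 lam x / tilted P1 P2 mu x)
        = (mu - lam) * (tilted P1 P2 lam x * (Real.log (P1 x) - Real.log (P2 x)))
          + (psif P1 P2 mu - psif P1 P2 lam) * tilted P1 P2 lam x := by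
      intro x _
      rw [Real.log_div (tilted_pos hs1 hs2 h1 lam x).ne' (tilted_pos hs1 hs2 h1 mu x).ne',
          log_tilted hs1 hs2 h1 lam x, log_tilted hs1 hs2 h1 mu x]
      ring
    rw [Finset.sum_congr rfl hc, Finset.sum_add_distrib, ← Finset.mul_sum, ← Finset.mul_sum,
        hts, mul_one]
    rw [show (∑ x, tilted P1 P2 lam x * (Real.log (P1 x) - Real.log (P2 x))) = mfun P1 P2 lam from rfl]
    ring
  rw [hkey] at h
  exact h

lemma mfun_mono (hs1 : ∀ x, 0 < P1 x) (hs2 : ∀ x, 0 < P2 x) (h1 : ∑ x, P1 x = 1)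
    {l1 l2 : ℝ} (hlt : l1 < l2) : mfun P1 P2 l2 ≤ mfun P1 P2 l1 := by
  have c1 := cross hs1 hs2 h1 l1 l2
  have c2 := cross hs1 hs2 h1 l2 l1
  by_contra hm
  push_neg at hm
  nlinarith [mul_pos (sub_pos.2 hlt) (sub_pos.2 hm)]

lemma mono_f (hs1 : ∀ x, 0 < P1 x) (hs2 : ∀ x, 0 < P2 x) (h1 : ∑ x, P1 x = 1)
    {l1 l2 : ℝ} (h0 : 0 ≤ l1) (hle : l1 ≤ l2) :
    klDiv (tilted P1 P2 l1) P1 ≤ klDiv (tilted P1 P2 l2) P1 := by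
  rcases eq_or_lt_of_le hle with rfl | hlt
  · exact le_refl _
  · have c2 := cross hs1 hs2 h1 l2 l1
    have hB := mfun_mono hs1 hs2 h1 hlt
    rw [f_eq hs1 hs2 h1, f_eq hs1 hs2 h1]
    nlinarith [mul_nonneg h0 (sub_nonneg.2 hB)]

lemma mono_g (hs1 : ∀ x, 0 < P1 x) (hs2 : ∀ x, 0 < P2 x) (h1 : ∑ x, P1 x = 1)
    {l1 l2 : ℝ} (h0 : l2 ≤ 1) (hle : l1 ≤ l2) :
    klDiv (tilted P1 P2 l2) P2 ≤ klDiv (tilted P1 P2 l1) P2 := by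
  rcases eq_or_lt_of_le hle with rfl | hlt
  · exact le_refl _
  · have c1 := cross hs1 hs2 h1 l1 l2
    have hB := mfun_mono hs1 hs2 h1 hlt
    rw [g_eq hs1 hs2 h1, g_eq hs1 hs2 h1]
    nlinarith [mul_nonneg (sub_nonneg.2 h0) (sub_nonneg.2 hB)]

lemma cont_tilted (hs1 : ∀ x, 0 < P1 x) (hs2 : ∀ x, 0 < P2 x) (h1 : ∑ x, P1 x = 1) (x : X) :
    Continuous fun lam : ℝ => tilted P1 P2 lam x := by
  have hbase : ∀ (c : ℝ), 0 < c → ∀ (u : ℝ → ℝ), Continuous u →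
      Continuous fun lam : ℝ => c ^ (u lam) := by
    intro c hc u hu
    have : (fun lam : ℝ => c ^ (u lam)) = fun lam => Real.exp (Real.log c * u lam) := by
      funext lam; rw [Real.rpow_def_of_pos hc]
    rw [this]
    exact Real.continuous_exp.comp (continuous_const.mul hu)
  have hnum : ∀ a : X, Continuous fun lam : ℝ => P1 a ^ (1 - lam) * P2 a ^ lam := by
    intro a
    exact (hbase _ (hs1 a) _ (continuous_const.sub continuous_id)).mul
      (hbase _ (hs2 a) _ continuous_id)
  exact (hnum x).div (continuous_finset_sum _ fun a _ => hnum a)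
    (fun lam => (Z_pos hs1 hs2 h1 lam).ne')

lemma cont_klDiv (hs1 : ∀ x, 0 < P1 x) (hs2 : ∀ x, 0 < P2 x) (h1 : ∑ x, P1 x = 1)
    (Q : X → ℝ) (hQ : ∀ x, 0 < Q x) :
    Continuous fun lam : ℝ => klDiv (tilted P1 P2 lam) Q := by
  unfold klDiv
  refine continuous_finset_sum _ fun x _ => ?_
  have ht := cont_tilted hs1 hs2 h1 (P2 := P2) x
  exact ht.mul ((ht.div_const (Q x)).log
    (fun lam => (div_pos (tilted_pos hs1 hs2 h1 lam x) (hQ x)).ne'))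

lemma tilted_one (hs1 : ∀ x, 0 < P1 x) (h2 : ∑ x, P2 x = 1) :
    tilted P1 P2 1 = P2 := by
  funext x
  unfold tilted
  rw [show (1:ℝ) - 1 = 0 by ring]
  simp only [Real.rpow_zero, Real.rpow_one, one_mul]
  rw [h2, div_one]

lemma klDiv_self (Q : X → ℝ) (hQ : ∀ x, 0 < Q x) : klDiv Q Q = 0 := by
  unfold klDiv
  refine Finset.sum_eq_zero fun x _ => ?_
  rw [div_self (hQ x).ne', Real.log_one, mul_zero]

lemma tilted_swap (P1 P2 : X → ℝ) (lam : ℝ) :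
    tilted P2 P1 lam = tilted P1 P2 (1 - lam) := by
  funext x
  unfold tilted
  rw [show (1:ℝ) - (1 - lam) = lam by ring, mul_comm]
  congr 1
  exact Finset.sum_congr rfl fun a _ => mul_comm _ _

end MaxAux

namespace MaxAux

lemma exists_lam1 {P1 P2 : X → ℝ} (hs1 : ∀ x, 0 < P1 x) (hs2 : ∀ x, 0 < P2 x)
    (h1 : ∑ x, P1 x = 1) (h2 : ∑ x, P2 x = 1)
    (lamstar : ℝ) (hlamstar : lamstar ∈ Set.Icc (0:ℝ) 1)
    (hstar : klDiv (tilted P1 P2 lamstar) P1 = klDiv (tilted P1 P2 lamstar) P2)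
    (γ : ℝ) (hγ0 : 0 ≤ γ) (hγ : γ ≤ klDiv (tilted P1 P2 lamstar) P1) :
    ∃ lam1 ∈ Set.Icc (0:ℝ) 1,
      klDiv (tilted P1 P2 lam1) P2 = γ ∧
      klDiv (tilted P1 P2 lam1) P1 = E1exp P1 P2 γ := by
  set g : ℝ → ℝ := fun lam => klDiv (tilted P1 P2 lam) P2 with hg
  set f : ℝ → ℝ := fun lam => klDiv (tilted P1 P2 lam) P1 with hf
  have hgcont : Continuous g := cont_klDiv hs1 hs2 h1 P2 hs2
  set S : Set ℝ := Set.Icc (0:ℝ) 1 ∩ {l | γ ≤ g l} with hS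
  have hScl : IsClosed S := isClosed_Icc.inter (isClosed_le continuous_const hgcont)
  have hScomp : IsCompact S := isCompact_Icc.inter_right
    (isClosed_le continuous_const hgcont)
  have hSne : S.Nonempty := ⟨lamstar, hlamstar, by
    simp only [Set.mem_setOf_eq]; rw [hg]; rw [hstar] at hγ; exact hγ⟩
  obtain ⟨lam1, hmem, hub⟩ := hScomp.exists_isGreatest hSne
  obtain ⟨hIcc, hge⟩ := hmem
  have hg1 : g 1 = 0 := by
    rw [hg]; simp only; rw [tilted_one hs1 h2]; exact klDiv_self P2 hs2
  have heq : g lam1 = γ := by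
    refine le_antisymm ?_ hge
    by_contra hlt
    push_neg at hlt
    have hlam1lt : lam1 < 1 := by
      rcases lt_or_eq_of_le hIcc.2 with h | h
      · exact h
      · exfalso; rw [h, hg1] at hlt; linarith
    have hev : ∀ᶠ l in nhds lam1, γ < g l ∧ l < 1 :=
      ((hgcont.continuousAt).eventually (eventually_gt_nhds hlt)).and
        (eventually_lt_nhds hlam1lt)
    rw [Metric.eventually_nhds_iff] at hev
    obtain ⟨ε, hε, hball⟩ := hev
    have hd : dist (lam1 + ε/2) lam1 < ε := by
      rw [Real.dist_eq]; rw [show lam1 + ε/2 - lam1 = ε/2 by ring, abs_of_pos (by linarith)]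
      linarith
    obtain ⟨hgl, hl1⟩ := hball hd
    have : lam1 + ε/2 ∈ S := ⟨⟨by linarith [hIcc.1], hl1.le⟩, hgl.le⟩
    have := hub this
    linarith
  refine ⟨lam1, hIcc, heq, ?_⟩
  have hGreat : IsGreatest { e | ∃ lam ∈ Set.Icc (0:ℝ) 1,
      γ ≤ klDiv (tilted P1 P2 lam) P2 ∧ e = klDiv (tilted P1 P2 lam) P1 } (f lam1) := by
    constructor
    · exact ⟨lam1, hIcc, hge, rfl⟩
    · rintro e ⟨l, hl, hgel, rfl⟩
      have hlS : l ∈ S := ⟨hl, hgel⟩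
      exact mono_f hs1 hs2 h1 hl.1 (hub hlS)
  rw [E1exp, hGreat.csSup_eq]

end MaxAux

namespace MaxAux

lemma E2_eq_E1_swap (P1 P2 : X → ℝ) (γ : ℝ) : E2exp P1 P2 γ = E1exp P2 P1 γ := by
  unfold E1exp E2exp
  congr 1
  ext e
  constructor
  · rintro ⟨l, hl, hge, rfl⟩
    refine ⟨1 - l, ⟨by linarith [hl.2], by linarith [hl.1]⟩, ?_, ?_⟩
    · rw [tilted_swap, show (1:ℝ) - (1 - l) = l by ring]; exact hge
    · rw [tilted_swap]
  · rintro ⟨l, hl, hge, rfl⟩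
    rw [tilted_swap] at hge ⊢
    exact ⟨1 - l, ⟨by linarith [hl.2], by linarith [hl.1]⟩, hge, rfl⟩

end MaxAux

/-- For every `0 ≤ γ ≤ D*` there exists `λ1 ∈ [0,1]` attaining the
maximum defining `E1(γ)` and satisfying `D(P^(λ1)‖P2) = γ` and `D(P^(λ1)‖P1) = E1(γ)`;
symmetrically there exists `λ2 ∈ [0,1]` attaining the maximum defining `E2(γ)` with
`D(P^(λ2)‖P1) = γ` and `D(P^(λ2)‖P2) = E2(γ)`. -/
theorem maximizers_exist
    {X : Type} [Fintype X]
    (P1 P2 : X → ℝ) (h1 : IsPMF P1) (h2 : IsPMF P2) (hne : P1 ≠ P2)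
    (hs1 : ∀ x, 0 < P1 x) (hs2 : ∀ x, 0 < P2 x)
    (lamstar : ℝ) (hlamstar : lamstar ∈ Set.Icc (0:ℝ) 1)
    (hstar : klDiv (tilted P1 P2 lamstar) P1 = klDiv (tilted P1 P2 lamstar) P2)
    (γ : ℝ) (hγ0 : 0 ≤ γ) (hγ : γ ≤ klDiv (tilted P1 P2 lamstar) P1) :
    (∃ lam1 ∈ Set.Icc (0:ℝ) 1,
        klDiv (tilted P1 P2 lam1) P2 = γ ∧
        klDiv (tilted P1 P2 lam1) P1 = E1exp P1 P2 γ) ∧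
    (∃ lam2 ∈ Set.Icc (0:ℝ) 1,
        klDiv (tilted P1 P2 lam2) P1 = γ ∧
        klDiv (tilted P1 P2 lam2) P2 = E2exp P1 P2 γ) := by
  constructor
  · exact MaxAux.exists_lam1 hs1 hs2 h1.2 h2.2 lamstar hlamstar hstar γ hγ0 hγ
  · have hswap : ∀ l : ℝ, tilted P2 P1 l = tilted P1 P2 (1 - l) := MaxAux.tilted_swap P1 P2
    have hstar' : klDiv (tilted P2 P1 (1 - lamstar)) P2 = klDiv (tilted P2 P1 (1 - lamstar)) P1 := by
      rw [hswap, show (1:ℝ) - (1 - lamstar) = lamstar by ring]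
      exact hstar.symm
    have hγ' : γ ≤ klDiv (tilted P2 P1 (1 - lamstar)) P2 := by
      rw [hswap, show (1:ℝ) - (1 - lamstar) = lamstar by ring, ← hstar]
      exact hγ
    obtain ⟨l, hl, hA, hB⟩ := MaxAux.exists_lam1 hs2 hs1 h2.2 h1.2 (1 - lamstar)
      ⟨by linarith [hlamstar.2], by linarith [hlamstar.1]⟩ hstar' γ hγ0 hγ'
    refine ⟨1 - l, ⟨by linarith [hl.2], by linarith [hl.1]⟩, ?_, ?_⟩
    · rw [← hswap]; exact hA
    · rw [← hswap, hB, MaxAux.E2_eq_E1_swap]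


end
end
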